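/- arXiv:math/0411480 — 2 statements merged into one kernel-verified Lean document; each statement's English description precedes it below -/
import Mathlib

section
/- Fix an integer n ≥ 1 and holomorphic functions a,b,c,d : Δ → ℂ with a(0) = a'(0) = b(0) = c(0) = 0, d(0) ≠ 0, and a(z)d(z) − b(z)c(z) = z^(2n) for all z ∈ Δ; set F(z) = z^(−n)·(a(z), b(z); c(z), d(z)) on Δ*, and assume F is null, i.e. det F'(z) = 0 for all z ∈ Δ*. Then the following are equivalent: (i) F'·F⁻¹ has a pole of order 2 at 0, i.e. z ↦ z²·F'(z)·F(z)⁻¹ extends holomorphically to Δ with nonzero value at 0; (ii) ord₀(c) = 2n − 1; (iii) b'(0) ≠ 0. Likewise, F⁻¹·F' has a pole of order 2 at 0 if and only if ord₀(b) = 2n − 1, if and only if c'(0) ≠ 0. -/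
/-!
STATEMENT 4: For a null `F` in normal form with pole of order `n`:
`F'F⁻¹` has a pole of order 2 at `0` ↔ `ord₀(c) = 2n−1` ↔ `b'(0) ≠ 0`;
likewise `F⁻¹F'` has a pole of order 2 at `0` ↔ `ord₀(b) = 2n−1` ↔ `c'(0) ≠ 0`.
-/

attribute [local instance] Matrix.normedAddCommGroup Matrix.normedSpace

open Metric Matrix

/-- The open unit disc in `ℂ`. -/
noncomputable def Disc : Set ℂ := Metric.ball (0 : ℂ) 1

/-- The punctured open unit disc in `ℂ`. -/
noncomputable def PDisc : Set ℂ := Metric.ball (0 : ℂ) 1 \ {0}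

/-- A matrix-valued holomorphic function `G` on the punctured disc has a pole of
order 2 at `0` if `z ↦ z² • G z` extends holomorphically to the disc with nonzero
value at `0`. -/
def HasPoleOrderTwoAtZero (G : ℂ → Matrix (Fin 2) (Fin 2) ℂ) : Prop :=
  ∃ H : ℂ → Matrix (Fin 2) (Fin 2) ℂ, DifferentiableOn ℂ H Disc ∧
    (∀ z ∈ PDisc, H z = (z ^ 2) • G z) ∧ H 0 ≠ 0

open Filter Topology

/-!
Write `M = (a, b; c, d)`, so that `F = z⁻ⁿ M`, `det M = z²ⁿ` and `F⁻¹ = z⁻ⁿ adj M`. Then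
`z² F' F⁻¹ = z²⁻²ⁿ M' adj M - n z`, so `F' F⁻¹` has a pole of order two exactly when
`M' adj M` vanishes to order exactly `2n - 2` at `0`.

Differentiating `det M = z²ⁿ` and expanding `det (z M' - n M) = 0` turns nullity into
`det M' = n² z²ⁿ⁻²`. Comparing vanishing orders in this identity and in `ad - bc = z²ⁿ` gives
`ord b + ord c ≤ 2n`, and `ord b = 1 ↔ ord c = 2n - 1`. The `(1,0)` entry `c'd - d'c` of `M' adj M`
vanishes to order exactly `ord c - 1`, and once `ord c = 2n - 1` every entry vanishes to order at
least `2n - 2`. The statements about `F⁻¹ F'` follow by transposing `F`, which swaps `b` and `c`.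
-/

section AnalyticOrder

variable {f g : ℂ → ℂ} {z₀ : ℂ}

lemma analyticOrderAt_pow_id (k : ℕ) : analyticOrderAt (fun z : ℂ => z ^ k) 0 = k := by
  simpa [Pi.pow_def] using analyticOrderAt_centeredMonomial (z₀ := (0 : ℂ)) (n := k)

lemma analyticOrderAt_const_mul_pow_id {C : ℂ} (hC : C ≠ 0) (k : ℕ) :
    analyticOrderAt (fun z : ℂ => C * z ^ k) 0 = k := by
  rw [show (fun z : ℂ => C * z ^ k) = (fun _ => C) * fun z => z ^ k from rfl,
    analyticOrderAt_mul analyticAt_const (by fun_prop), analyticOrderAt_pow_id,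
    analyticAt_const.analyticOrderAt_eq_zero.2 hC, zero_add]

lemma AnalyticAt.analyticOrderAt_deriv_add_one_of_eq_zero (hf : AnalyticAt ℂ f z₀)
    (hf0 : f z₀ = 0) : analyticOrderAt (deriv f) z₀ + 1 = analyticOrderAt f z₀ := by
  simpa [hf0] using hf.analyticOrderAt_deriv_add_one

lemma AnalyticAt.le_analyticOrderAt_deriv (hf : AnalyticAt ℂ f z₀) {k : ℕ}
    (h : (k + 1 : ℕ) ≤ analyticOrderAt f z₀) : k ≤ analyticOrderAt (deriv f) z₀ := by
  have hf0 : f z₀ = 0 := apply_eq_zero_of_analyticOrderAt_ne_zero fun h0 => by simp_all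
  exact (analyticOrderAt_deriv_ge_iff hf hf0).2 (by exact_mod_cast h)

lemma AnalyticAt.deriv_ne_zero_iff_analyticOrderAt_eq_one (hf : AnalyticAt ℂ f z₀)
    (hf0 : f z₀ = 0) : deriv f z₀ ≠ 0 ↔ analyticOrderAt f z₀ = 1 := by
  refine ⟨hf.analyticOrderAt_eq_one_of_zero_deriv_ne_zero hf0, fun h => ?_⟩
  rw [← hf.analyticOrderAt_deriv_add_one_of_eq_zero hf0] at h
  exact hf.deriv.analyticOrderAt_eq_zero.1 (by simpa using h)

lemma AnalyticAt.analyticOrderAt_le_mul_right (hf : AnalyticAt ℂ f z₀)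
    (hg : AnalyticAt ℂ g z₀) : analyticOrderAt f z₀ ≤ analyticOrderAt (f * g) z₀ := by
  rw [analyticOrderAt_mul hf hg]
  exact le_self_add

lemma analyticOrderAt_sub_eq_left_of_lt (h : analyticOrderAt f z₀ < analyticOrderAt g z₀) :
    analyticOrderAt (f - g) z₀ = analyticOrderAt f z₀ := by
  rw [sub_eq_add_neg, analyticOrderAt_add_eq_left_of_lt (by simpa using h)]

lemma analyticOrderAt_sub_eq_right_of_lt (h : analyticOrderAt g z₀ < analyticOrderAt f z₀) :
    analyticOrderAt (f - g) z₀ = analyticOrderAt g z₀ := by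
  rw [sub_eq_add_neg, analyticOrderAt_add_eq_right_of_lt (by simpa using h), analyticOrderAt_neg]

lemma le_analyticOrderAt_mul_sub_mul {f₁ g₁ f₂ g₂ : ℂ → ℂ} {k : ℕ∞}
    (hf₁ : AnalyticAt ℂ f₁ z₀) (hg₁ : AnalyticAt ℂ g₁ z₀) (hf₂ : AnalyticAt ℂ f₂ z₀)
    (hg₂ : AnalyticAt ℂ g₂ z₀) (h₁ : k ≤ analyticOrderAt f₁ z₀ ∨ k ≤ analyticOrderAt g₁ z₀)
    (h₂ : k ≤ analyticOrderAt f₂ z₀ ∨ k ≤ analyticOrderAt g₂ z₀) :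
    k ≤ analyticOrderAt (fun z => f₁ z * g₁ z - f₂ z * g₂ z) z₀ := by
  refine le_trans (le_min ?_ ?_) (le_analyticOrderAt_sub (f := f₁ * g₁) (g := f₂ * g₂))
  · rw [analyticOrderAt_mul hf₁ hg₁]
    exact h₁.elim (fun h => le_add_right h) fun h => le_add_left h
  · rw [analyticOrderAt_mul hf₂ hg₂]
    exact h₂.elim (fun h => le_add_right h) fun h => le_add_left h

lemma analyticOrderAt_deriv_mul_sub_deriv_mul (hf : AnalyticAt ℂ f z₀) (hg : AnalyticAt ℂ g z₀)
    (hf0 : f z₀ = 0) (hg0 : g z₀ ≠ 0) (hf_fin : analyticOrderAt f z₀ ≠ ⊤) :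
    analyticOrderAt (fun z => deriv f z * g z - deriv g z * f z) z₀ =
      analyticOrderAt (deriv f) z₀ := by
  have hf' := hf.analyticOrderAt_deriv_add_one_of_eq_zero hf0
  have hf'_fin : analyticOrderAt (deriv f) z₀ ≠ ⊤ := fun h => hf_fin (by simp [← hf', h])
  have hfg : analyticOrderAt (deriv f * g) z₀ = analyticOrderAt (deriv f) z₀ := by
    rw [analyticOrderAt_mul hf.deriv hg, hg.analyticOrderAt_eq_zero.2 hg0, add_zero]
  rw [← hfg]
  refine analyticOrderAt_sub_eq_left_of_lt (f := deriv f * g) (g := deriv g * f) ?_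
  rw [hfg, analyticOrderAt_mul hg.deriv hf, ← hf']
  exact ((ENat.lt_add_one_iff hf'_fin).2 le_rfl).trans_le le_add_self

lemma analyticOrderAt_eq_of_mul_sub_mul_eq {a b c d : ℂ → ℂ} (ha : AnalyticAt ℂ a 0)
    (hd : AnalyticAt ℂ d 0) (hd0 : d 0 ≠ 0) {k : ℕ} (hdet : a * d - b * c =ᶠ[𝓝 0] fun z => z ^ k) :
    analyticOrderAt a 0 = analyticOrderAt ((fun z => z ^ k) + b * c) 0 := by
  rw [← add_zero (analyticOrderAt a 0), ← hd.analyticOrderAt_eq_zero.2 hd0,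
    ← analyticOrderAt_mul ha hd]
  exact analyticOrderAt_congr (hdet.mono fun z hz => by simp [← hz])

end AnalyticOrder

section MatrixFunctions

lemma differentiableOn_matrix_iff {ι κ : Type*} [Fintype κ] {P : ℂ → Matrix ι κ ℂ} {s : Set ℂ} :
    DifferentiableOn ℂ P s ↔ ∀ i j, DifferentiableOn ℂ (fun z => P z i j) s :=
  (differentiableOn_pi (Φ := fun z (i : ι) (j : κ) => P z i j)).trans
    (forall_congr' fun _ => differentiableOn_pi)

variable {ι κ : Type*} [Fintype ι] [Fintype κ]

lemma analyticAt_matrix_iff {P : ℂ → Matrix ι κ ℂ} {z₀ : ℂ} :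
    AnalyticAt ℂ P z₀ ↔ ∀ i j, AnalyticAt ℂ (fun z => P z i j) z₀ :=
  (analyticAt_pi_iff (f := fun (i : ι) (z : ℂ) (j : κ) => P z i j)).trans
    (forall_congr' fun _ => analyticAt_pi_iff)

lemma natCast_le_analyticOrderAt_matrix_iff {P : ℂ → Matrix ι κ ℂ} {z₀ : ℂ}
    (hP : AnalyticAt ℂ P z₀) {k : ℕ} :
    k ≤ analyticOrderAt P z₀ ↔ ∀ i j, k ≤ analyticOrderAt (fun z => P z i j) z₀ := by
  simp only [natCast_le_analyticOrderAt hP,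
    natCast_le_analyticOrderAt (analyticAt_matrix_iff.1 hP _ _)]
  constructor
  · rintro ⟨g, hg, hPg⟩ i j
    exact ⟨fun z => g z i j, analyticAt_matrix_iff.1 hg i j, hPg.mono fun z hz => by simp [hz]⟩
  · intro h
    choose g hg hPg using h
    refine ⟨fun z => Matrix.of fun i j => g i j z, analyticAt_matrix_iff.2 hg, ?_⟩
    filter_upwards [eventually_all.2 fun i => eventually_all.2 (hPg i)] with z hz
    ext i j
    simp [hz i j]

lemma analyticOrderAt_le_analyticOrderAt_apply {P : ℂ → Matrix ι κ ℂ} {z₀ : ℂ} (i : ι) (j : κ) :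
    analyticOrderAt P z₀ ≤ analyticOrderAt (fun z => P z i j) z₀ := by
  by_cases hP : AnalyticAt ℂ P z₀
  · exact ENat.forall_natCast_le_iff_le.1 fun k hk =>
      (natCast_le_analyticOrderAt_matrix_iff hP).1 hk i j
  · simp [analyticOrderAt_of_not_analyticAt hP]

lemma deriv_matrix_transpose (F : ℂ → Matrix ι κ ℂ) (z : ℂ) :
    deriv (fun z => (F z)ᵀ) z = (deriv F z)ᵀ :=
  congrArg (fun L => L 1)
    ((transposeLinearEquiv ι κ ℂ ℂ).toContinuousLinearEquiv.comp_fderiv (f := F) (x := z))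

lemma HasDerivAt.matrix_fin_two {a b c d : ℂ → ℂ} {a' b' c' d' z : ℂ} (ha : HasDerivAt a a' z)
    (hb : HasDerivAt b b' z) (hc : HasDerivAt c c' z) (hd : HasDerivAt d d' z) :
    HasDerivAt (fun w => !![a w, b w; c w, d w]) !![a', b'; c', d'] z := by
  refine hasDerivAt_pi.2 fun i => hasDerivAt_pi.2 fun j => ?_
  fin_cases i <;> fin_cases j <;> simpa

lemma HasDerivAt.inv_pow_smul {E : Type*} [NormedAddCommGroup E] [NormedSpace ℂ E] {M : ℂ → E}
    {M' : E} {z : ℂ} (hM : HasDerivAt M M' z) (hz : z ≠ 0) (k : ℕ) :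
    HasDerivAt (fun w => (w ^ k)⁻¹ • M w) ((z ^ (k + 1))⁻¹ • (z • M' - (k : ℂ) • M z)) z := by
  refine (((hasDerivAt_pow k z).inv (pow_ne_zero k hz)).smul hM).congr_deriv ?_
  cases k with
  | zero => simp [smul_smul, inv_mul_cancel₀ hz]
  | succ k =>
    simp only [Nat.add_sub_cancel, Pi.inv_apply]
    match_scalars <;> field_simp <;> ring

variable [DecidableEq ι]

lemma inv_inv_pow_smul_eq_of_det_eq {A : Matrix ι ι ℂ} {z : ℂ} (hz : z ≠ 0) {k : ℕ}
    (hA : A.det = (z ^ k) ^ 2) : ((z ^ k)⁻¹ • A)⁻¹ = (z ^ k)⁻¹ • adjugate A := by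
  refine inv_eq_right_inv ?_
  rw [smul_mul_smul, mul_adjugate, hA, smul_smul]
  field_simp
  simp

lemma sq_smul_deriv_mul_inv_eq_of_det_eq {A A' : Matrix ι ι ℂ} {z : ℂ} (hz : z ≠ 0) {m : ℕ}
    (hA : A.det = z ^ (2 * m + 2)) :
    z ^ 2 • (((z ^ (m + 2))⁻¹ • (z • A' - ((m : ℂ) + 1) • A)) * ((z ^ (m + 1))⁻¹ • adjugate A)) =
      (z ^ (2 * m))⁻¹ • (A' * adjugate A) - (((m : ℂ) + 1) * z) • 1 := by
  rw [smul_mul_smul, sub_mul, smul_mul_assoc, smul_mul_assoc, mul_adjugate, hA]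
  match_scalars <;> field_simp <;> ring

end MatrixFunctions

section Disc

lemma isOpen_disc : IsOpen Disc := isOpen_ball

lemma disc_mem_nhds_zero : Disc ∈ 𝓝 (0 : ℂ) := isOpen_disc.mem_nhds (mem_ball_self one_pos)

lemma ne_zero_of_mem_pDisc {z : ℂ} (hz : z ∈ PDisc) : z ≠ 0 := hz.2

lemma eventuallyEq_nhds_zero_of_eqOn_pDisc {E : Type*} [TopologicalSpace E] [T2Space E]
    {f g : ℂ → E} (hf : ContinuousAt f 0) (hg : ContinuousAt g 0) (h : Set.EqOn f g PDisc) :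
    f =ᶠ[𝓝 0] g :=
  (hf.eventuallyEq_nhds_iff_eventuallyEq_nhdsNE hg).1
    (mem_of_superset (sdiff_mem_nhdsWithin_compl disc_mem_nhds_zero _) h)

lemma exists_extension_inv_pow_smul_iff {E : Type*} [NormedAddCommGroup E] [NormedSpace ℂ E]
    [CompleteSpace E] {P : ℂ → E} (hP : DifferentiableOn ℂ P Disc) (k : ℕ) :
    (∃ H : ℂ → E, DifferentiableOn ℂ H Disc ∧ (∀ z ∈ PDisc, H z = (z ^ k)⁻¹ • P z) ∧ H 0 ≠ 0) ↔
      analyticOrderAt P 0 = k := by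
  rw [(hP.analyticAt disc_mem_nhds_zero).analyticOrderAt_eq_natCast]
  constructor
  · rintro ⟨H, hH, hHP, hH0⟩
    refine ⟨H, hH.analyticAt disc_mem_nhds_zero, hH0, ?_⟩
    have hHc : ContinuousAt H 0 := hH.continuousOn.continuousAt disc_mem_nhds_zero
    refine eventuallyEq_nhds_zero_of_eqOn_pDisc
      (hP.continuousOn.continuousAt disc_mem_nhds_zero) (by fun_prop) fun z hz => ?_
    simp [hHP z hz, smul_smul, mul_inv_cancel₀ (pow_ne_zero k (ne_zero_of_mem_pDisc hz))]
  · rintro ⟨g, hg, hg0, hPg⟩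
    classical
    set H := Function.update (fun z => (z ^ k)⁻¹ • P z) 0 (g 0)
    have hHg : H =ᶠ[𝓝 0] g := by
      refine eventuallyEq_nhds_of_eventuallyEq_nhdsNE ?_ (by simp [H])
      filter_upwards [Function.update_eventuallyEq_nhdsNE (fun z => (z ^ k)⁻¹ • P z) 0 0 (g 0),
        hPg.filter_mono nhdsWithin_le_nhds, self_mem_nhdsWithin] with z h1 h2 h3
      simp_all [H, smul_smul]
    refine ⟨H, fun z hz => ?_, fun z hz => Function.update_of_ne hz.2 .., by simpa [H] using hg0⟩
    rcases eq_or_ne z 0 with rfl | hz0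
    · exact (hg.differentiableAt.congr_of_eventuallyEq hHg).differentiableWithinAt
    · have hHz : H =ᶠ[𝓝 z] fun z => (z ^ k)⁻¹ • P z := by
        filter_upwards [isOpen_ne.mem_nhds hz0] with w hw using Function.update_of_ne hw ..
      refine (DifferentiableAt.congr_of_eventuallyEq ?_ hHz).differentiableWithinAt
      exact ((differentiableAt_pow (x := z) k).inv (pow_ne_zero k hz0)).smul
        (hP.differentiableAt (isOpen_disc.mem_nhds hz))

lemma hasPoleOrderTwoAtZero_iff_analyticOrderAt_eq {G P : ℂ → Matrix (Fin 2) (Fin 2) ℂ} {k : ℕ}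
    (s : ℂ) (hP : DifferentiableOn ℂ P Disc)
    (hGP : ∀ z ∈ PDisc, z ^ 2 • G z = (z ^ k)⁻¹ • P z - (s * z) • 1) :
    HasPoleOrderTwoAtZero G ↔ analyticOrderAt P 0 = k := by
  have hlin : Differentiable ℂ fun z : ℂ => (s * z) • (1 : Matrix (Fin 2) (Fin 2) ℂ) := by
    fun_prop
  rw [← exists_extension_inv_pow_smul_iff hP k]
  constructor
  · rintro ⟨H, hH, hHG, hH0⟩
    exact ⟨fun z => H z + (s * z) • 1, hH.add hlin.differentiableOn,
      fun z hz => by simp [hHG z hz, hGP z hz], by simpa using hH0⟩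
  · rintro ⟨H, hH, hHP, hH0⟩
    exact ⟨fun z => H z - (s * z) • 1, hH.sub hlin.differentiableOn,
      fun z hz => by simp [hHP z hz, hGP z hz], by simpa using hH0⟩

lemma HasPoleOrderTwoAtZero.transpose {G : ℂ → Matrix (Fin 2) (Fin 2) ℂ}
    (hG : HasPoleOrderTwoAtZero G) : HasPoleOrderTwoAtZero fun z => (G z)ᵀ := by
  obtain ⟨H, hH, hHG, hH0⟩ := hG
  refine ⟨fun z => (H z)ᵀ, ?_, fun z hz => by simp [hHG z hz], by simpa using hH0⟩
  exact (transposeLinearEquiv (Fin 2) (Fin 2) ℂ ℂ).toContinuousLinearEquiv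
    |>.comp_differentiableOn_iff.2 hH

lemma hasPoleOrderTwoAtZero_transpose_iff {G : ℂ → Matrix (Fin 2) (Fin 2) ℂ} :
    HasPoleOrderTwoAtZero (fun z => (G z)ᵀ) ↔ HasPoleOrderTwoAtZero G :=
  ⟨fun h => by simpa using h.transpose, HasPoleOrderTwoAtZero.transpose⟩

end Disc

noncomputable def derivMulAdjugate (a b c d : ℂ → ℂ) (z : ℂ) : Matrix (Fin 2) (Fin 2) ℂ :=
  !![deriv a z, deriv b z; deriv c z, deriv d z] * adjugate !![a z, b z; c z, d z]

lemma derivMulAdjugate_eq (a b c d : ℂ → ℂ) (z : ℂ) :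
    derivMulAdjugate a b c d z =
      !![deriv a z * d z - deriv b z * c z, deriv b z * a z - deriv a z * b z;
        deriv c z * d z - deriv d z * c z, deriv d z * a z - deriv c z * b z] := by
  rw [derivMulAdjugate, adjugate_fin_two_of, mul_fin_two]
  ext i j
  fin_cases i <;> fin_cases j <;> simp <;> ring

/-- The germs at `0` of the entries of a null `F = z⁻⁽ᵐ⁺¹⁾ (a, b; c, d)`; nullity is recorded in
the form `det M' = (m + 1)² z²ᵐ` of `IsNullPole.deriv_mul_deriv_sub_eq`. -/
structure IsNullGerm (m : ℕ) (a b c d : ℂ → ℂ) : Prop where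
  analyticAt_a : AnalyticAt ℂ a 0
  analyticAt_b : AnalyticAt ℂ b 0
  analyticAt_c : AnalyticAt ℂ c 0
  analyticAt_d : AnalyticAt ℂ d 0
  b_zero : b 0 = 0
  c_zero : c 0 = 0
  d_zero_ne : d 0 ≠ 0
  det_eventuallyEq : a * d - b * c =ᶠ[𝓝 0] fun z => z ^ (2 * m + 2)
  deriv_mul_deriv_sub_eventuallyEq :
    deriv a * deriv d - deriv b * deriv c =ᶠ[𝓝 0] fun z => ((m : ℂ) + 1) ^ 2 * z ^ (2 * m)

namespace IsNullGerm

variable {m : ℕ} {a b c d : ℂ → ℂ}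

lemma one_le_analyticOrderAt_b (h : IsNullGerm m a b c d) : 1 ≤ analyticOrderAt b 0 :=
  Order.one_le_iff_ne_zero.2 (h.analyticAt_b.analyticOrderAt_ne_zero.2 h.b_zero)

lemma analyticOrderAt_deriv_mul_deriv_sub (h : IsNullGerm m a b c d) :
    analyticOrderAt (deriv a * deriv d - deriv b * deriv c) 0 = (2 * m : ℕ) := by
  rw [analyticOrderAt_congr h.deriv_mul_deriv_sub_eventuallyEq,
    analyticOrderAt_const_mul_pow_id (by norm_cast; positivity)]

lemma analyticOrderAt_add_analyticOrderAt_le (h : IsNullGerm m a b c d) :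
    analyticOrderAt b 0 + analyticOrderAt c 0 ≤ (2 * m + 2 : ℕ) := by
  have hW := h.analyticOrderAt_deriv_mul_deriv_sub
  obtain ⟨ha, hb, hc, hd, hb0, hc0, hd0, hdet, -⟩ := h
  by_contra! hlt
  have ha_ord : analyticOrderAt a 0 = (2 * m + 1 : ℕ) + 1 := by
    rw [analyticOrderAt_eq_of_mul_sub_mul_eq ha hd hd0 hdet, analyticOrderAt_add_eq_left_of_lt]
    · rw [analyticOrderAt_pow_id]; norm_cast
    · rwa [analyticOrderAt_mul hb hc, analyticOrderAt_pow_id]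
  have had : (2 * m + 1 : ℕ) ≤ analyticOrderAt (deriv a * deriv d) 0 :=
    (analyticOrderAt_deriv_of_pos ha ha_ord).ge.trans
      (ha.deriv.analyticOrderAt_le_mul_right hd.deriv)
  have hbc : (2 * m + 1 : ℕ) ≤ analyticOrderAt (deriv b * deriv c) 0 := by
    rw [analyticOrderAt_mul hb.deriv hc.deriv]
    rw [← hb.analyticOrderAt_deriv_add_one_of_eq_zero hb0,
      ← hc.analyticOrderAt_deriv_add_one_of_eq_zero hc0] at hlt
    generalize analyticOrderAt (deriv b) 0 = x at hlt ⊢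
    generalize analyticOrderAt (deriv c) 0 = y at hlt ⊢
    cases x <;> cases y <;> simp_all
    norm_cast at hlt ⊢
    omega
  have := (le_min had hbc).trans le_analyticOrderAt_sub
  rw [hW] at this
  norm_cast at this
  omega

lemma analyticOrderAt_c_ne_top (h : IsNullGerm m a b c d) : analyticOrderAt c 0 ≠ ⊤ := fun hc => by
  have hle := h.analyticOrderAt_add_analyticOrderAt_le
  rw [hc, add_top, top_le_iff] at hle
  exact ENat.natCast_ne_top _ hle

lemma analyticOrderAt_c_eq_of_analyticOrderAt_b_eq_one (h : IsNullGerm m a b c d)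
    (hb1 : analyticOrderAt b 0 = 1) : analyticOrderAt c 0 = (2 * m + 1 : ℕ) := by
  have hle := h.analyticOrderAt_add_analyticOrderAt_le
  have hc_fin := h.analyticOrderAt_c_ne_top
  have hW := h.analyticOrderAt_deriv_mul_deriv_sub
  obtain ⟨ha, hb, hc, hd, hb0, hc0, hd0, hdet, -⟩ := h
  by_contra hne
  obtain ⟨k, hk⟩ : ∃ k : ℕ, analyticOrderAt c 0 = (k + 1 : ℕ) := by
    have hc1 : analyticOrderAt c 0 ≠ 0 := hc.analyticOrderAt_ne_zero.2 hc0
    obtain ⟨x, hx⟩ := ENat.ne_top_iff_exists.1 hc_fin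
    exact ⟨x - 1, by rw [← hx] at hc1 ⊢; norm_cast at hc1 ⊢; omega⟩
  rw [hb1, hk] at hle
  rw [hk] at hne
  norm_cast at hle hne
  have ha_ord : analyticOrderAt a 0 = (k + 1 : ℕ) + 1 := by
    rw [analyticOrderAt_eq_of_mul_sub_mul_eq ha hd hd0 hdet, analyticOrderAt_add_eq_right_of_lt]
    all_goals rw [analyticOrderAt_mul hb hc, hb1, hk]
    · norm_cast; omega
    · rw [analyticOrderAt_pow_id]; norm_cast; omega
  have had : (k + 1 : ℕ) ≤ analyticOrderAt (deriv a * deriv d) 0 :=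
    (analyticOrderAt_deriv_of_pos ha ha_ord).ge.trans
      (ha.deriv.analyticOrderAt_le_mul_right hd.deriv)
  have hbc : analyticOrderAt (deriv b * deriv c) 0 = k := by
    have hb' : analyticOrderAt (deriv b) 0 = 0 := hb.deriv.analyticOrderAt_eq_zero.2
      ((hb.deriv_ne_zero_iff_analyticOrderAt_eq_one hb0).2 hb1)
    rw [analyticOrderAt_mul hb.deriv hc.deriv, hb', zero_add, analyticOrderAt_deriv_of_pos hc hk]
  have hW' := analyticOrderAt_sub_eq_right_of_lt
    (hbc ▸ (Nat.cast_lt.2 k.lt_succ_self).trans_le had)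
  rw [hbc, hW] at hW'
  norm_cast at hW'
  omega

lemma analyticOrderAt_c_eq_iff_analyticOrderAt_b_eq_one (h : IsNullGerm m a b c d) :
    analyticOrderAt c 0 = (2 * m + 1 : ℕ) ↔ analyticOrderAt b 0 = 1 := by
  refine ⟨fun hc => ?_, h.analyticOrderAt_c_eq_of_analyticOrderAt_b_eq_one⟩
  have hle := h.analyticOrderAt_add_analyticOrderAt_le
  have hb1 := h.one_le_analyticOrderAt_b
  rw [hc] at hle
  generalize analyticOrderAt b 0 = x at hle hb1 ⊢
  cases x with
  | top => rw [top_add, top_le_iff] at hle; exact absurd hle (ENat.natCast_ne_top _)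
  | coe x => norm_cast at hle hb1 ⊢; omega

lemma analyticAt_derivMulAdjugate (h : IsNullGerm m a b c d) :
    AnalyticAt ℂ (derivMulAdjugate a b c d) 0 := by
  have := h.analyticAt_a; have := h.analyticAt_b; have := h.analyticAt_c; have := h.analyticAt_d
  have := h.analyticAt_a.deriv; have := h.analyticAt_b.deriv
  have := h.analyticAt_c.deriv; have := h.analyticAt_d.deriv
  refine analyticAt_matrix_iff.2 fun i j => ?_
  fin_cases i <;> fin_cases j <;> simp [derivMulAdjugate_eq] <;> fun_prop

lemma analyticOrderAt_derivMulAdjugate_one_zero (h : IsNullGerm m a b c d) :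
    analyticOrderAt (fun z => derivMulAdjugate a b c d z 1 0) 0 = analyticOrderAt (deriv c) 0 := by
  simp only [derivMulAdjugate_eq, of_apply, cons_val', cons_val_one, cons_val_zero, empty_val',
    cons_val_fin_one]
  exact analyticOrderAt_deriv_mul_sub_deriv_mul h.analyticAt_c h.analyticAt_d h.c_zero
    h.d_zero_ne h.analyticOrderAt_c_ne_top

lemma natCast_le_analyticOrderAt_derivMulAdjugate (h : IsNullGerm m a b c d)
    (hc2m : analyticOrderAt c 0 = (2 * m + 1 : ℕ)) :
    (2 * m : ℕ) ≤ analyticOrderAt (derivMulAdjugate a b c d) 0 := by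
  refine (natCast_le_analyticOrderAt_matrix_iff h.analyticAt_derivMulAdjugate).2 fun i j => ?_
  obtain ⟨ha, hb, hc, hd, -, hc0, hd0, hdet, -⟩ := h
  have := ha.deriv; have := hb.deriv; have := hc.deriv; have := hd.deriv
  -- Every product in an entry has a factor among `a, a', c, c'`.
  have hc_le : ((2 * m : ℕ) : ℕ∞) ≤ analyticOrderAt c 0 := hc2m ▸ Nat.cast_le.2 (Nat.le_succ _)
  have hc'_le : ((2 * m : ℕ) : ℕ∞) ≤ analyticOrderAt (deriv c) 0 :=
    (analyticOrderAt_deriv_of_pos hc (hc2m.trans (Nat.cast_succ _))).ge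
  have ha_le : ((2 * m + 1 : ℕ) : ℕ∞) ≤ analyticOrderAt a 0 := by
    rw [analyticOrderAt_eq_of_mul_sub_mul_eq ha hd hd0 hdet]
    refine (le_min ?_ ?_).trans le_analyticOrderAt_add
    · rw [analyticOrderAt_pow_id]; exact Nat.cast_le.2 (Nat.le_succ _)
    · rw [analyticOrderAt_mul hb hc, hc2m]; exact le_add_self
  have ha'_le : ((2 * m : ℕ) : ℕ∞) ≤ analyticOrderAt (deriv a) 0 :=
    ha.le_analyticOrderAt_deriv ha_le
  replace ha_le : ((2 * m : ℕ) : ℕ∞) ≤ analyticOrderAt a 0 :=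
    (Nat.cast_le.2 (Nat.le_succ _)).trans ha_le
  fin_cases i <;> fin_cases j <;>
    simp only [derivMulAdjugate_eq, of_apply, cons_val', empty_val', cons_val_fin_one] <;>
    apply le_analyticOrderAt_mul_sub_mul <;> first | fun_prop | exact .inl ‹_› | exact .inr ‹_›

lemma analyticOrderAt_derivMulAdjugate_eq_iff (h : IsNullGerm m a b c d) :
    analyticOrderAt (derivMulAdjugate a b c d) 0 = (2 * m : ℕ) ↔
      analyticOrderAt c 0 = (2 * m + 1 : ℕ) := by
  have hP10 := (analyticOrderAt_le_analyticOrderAt_apply 1 0).trans_eq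
    h.analyticOrderAt_derivMulAdjugate_one_zero
  constructor
  · intro hP
    have hle := h.analyticOrderAt_add_analyticOrderAt_le
    have hb1 := h.one_le_analyticOrderAt_b
    rw [hP] at hP10
    rw [← h.analyticAt_c.analyticOrderAt_deriv_add_one_of_eq_zero h.c_zero] at hle ⊢
    generalize analyticOrderAt (deriv c) 0 = x at hP10 hle ⊢
    generalize analyticOrderAt b 0 = y at hb1 hle
    cases x <;> cases y <;> simp_all
    norm_cast at *
    omega
  · intro hc2m
    rw [analyticOrderAt_deriv_of_pos h.analyticAt_c (hc2m.trans (Nat.cast_succ _))] at hP10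
    exact le_antisymm hP10 (h.natCast_le_analyticOrderAt_derivMulAdjugate hc2m)

end IsNullGerm

structure IsNullPole (n : ℕ) (a b c d : ℂ → ℂ) (F : ℂ → Matrix (Fin 2) (Fin 2) ℂ) : Prop where
  one_le : 1 ≤ n
  differentiableOn_a : DifferentiableOn ℂ a Disc
  differentiableOn_b : DifferentiableOn ℂ b Disc
  differentiableOn_c : DifferentiableOn ℂ c Disc
  differentiableOn_d : DifferentiableOn ℂ d Disc
  b_zero : b 0 = 0
  c_zero : c 0 = 0
  d_zero_ne : d 0 ≠ 0
  det_eq : ∀ z ∈ Disc, a z * d z - b z * c z = z ^ (2 * n)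
  eq_smul : ∀ z, F z = (z ^ n)⁻¹ • !![a z, b z; c z, d z]
  det_deriv : ∀ z ∈ PDisc, (deriv F z).det = 0

namespace IsNullPole

variable {n m : ℕ} {a b c d : ℂ → ℂ} {F : ℂ → Matrix (Fin 2) (Fin 2) ℂ}

lemma transpose (h : IsNullPole n a b c d F) : IsNullPole n a c b d fun z => (F z)ᵀ where
  one_le := h.one_le
  differentiableOn_a := h.differentiableOn_a
  differentiableOn_b := h.differentiableOn_c
  differentiableOn_c := h.differentiableOn_b
  differentiableOn_d := h.differentiableOn_d
  b_zero := h.c_zero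
  c_zero := h.b_zero
  d_zero_ne := h.d_zero_ne
  det_eq z hz := by rw [← h.det_eq z hz]; ring
  eq_smul z := by rw [h.eq_smul, transpose_smul]; exact congrArg _ (eta_fin_two _)
  det_deriv z hz := by rw [deriv_matrix_transpose, det_transpose, h.det_deriv z hz]

lemma deriv_eq (h : IsNullPole n a b c d F) {z : ℂ} (hz : z ∈ PDisc) :
    deriv F z = (z ^ (n + 1))⁻¹ • (z • !![deriv a z, deriv b z; deriv c z, deriv d z] -
      (n : ℂ) • !![a z, b z; c z, d z]) := by
  have hD : Disc ∈ 𝓝 z := isOpen_disc.mem_nhds hz.1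
  rw [show F = fun w => (w ^ n)⁻¹ • !![a w, b w; c w, d w] from funext h.eq_smul]
  exact (HasDerivAt.matrix_fin_two (h.differentiableOn_a.differentiableAt hD).hasDerivAt
    (h.differentiableOn_b.differentiableAt hD).hasDerivAt
    (h.differentiableOn_c.differentiableAt hD).hasDerivAt
    (h.differentiableOn_d.differentiableAt hD).hasDerivAt).inv_pow_smul hz.2 n |>.deriv

lemma deriv_mul_add_mul_deriv_sub_eq (h : IsNullPole (m + 1) a b c d F) {z : ℂ} (hz : z ∈ Disc) :
    deriv a z * d z + a z * deriv d z - (deriv b z * c z + b z * deriv c z) =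
      (2 * m + 2) * z ^ (2 * m + 1) := by
  have hD : Disc ∈ 𝓝 z := isOpen_disc.mem_nhds hz
  have hdet : (fun w => a w * d w - b w * c w) =ᶠ[𝓝 z] fun w => w ^ (2 * (m + 1)) :=
    mem_of_superset hD h.det_eq
  have := hdet.deriv_eq
  rw [((((h.differentiableOn_a.differentiableAt hD).hasDerivAt.fun_mul
    (h.differentiableOn_d.differentiableAt hD).hasDerivAt).fun_sub
    ((h.differentiableOn_b.differentiableAt hD).hasDerivAt.fun_mul
    (h.differentiableOn_c.differentiableAt hD).hasDerivAt))).deriv, deriv_pow_field] at this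
  rw [this, show 2 * (m + 1) - 1 = 2 * m + 1 by omega]
  push_cast
  ring

/-- Nullity `det (z M' - (m + 1) M) = 0`, rewritten with `(det M)' = (2m + 2) z²ᵐ⁺¹`. -/
lemma deriv_mul_deriv_sub_eq (h : IsNullPole (m + 1) a b c d F) {z : ℂ} (hz : z ∈ PDisc) :
    deriv a z * deriv d z - deriv b z * deriv c z = ((m : ℂ) + 1) ^ 2 * z ^ (2 * m) := by
  have hnull := h.det_deriv z hz
  rw [h.deriv_eq hz, det_smul, det_fin_two, mul_eq_zero] at hnull
  have key := hnull.resolve_left (by simp [ne_zero_of_mem_pDisc hz])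
  simp only [smul_of, smul_cons, smul_eq_mul, smul_empty, Matrix.sub_apply, of_apply, Nat.cast_add,
    Nat.cast_one, cons_val', cons_val_zero, cons_val_one, cons_val_fin_one] at key
  refine mul_left_cancel₀ (pow_ne_zero 2 (ne_zero_of_mem_pDisc hz)) ?_
  linear_combination key + ((m : ℂ) + 1) * z * h.deriv_mul_add_mul_deriv_sub_eq hz.1 -
    ((m : ℂ) + 1) ^ 2 * h.det_eq z hz.1

lemma isNullGerm (h : IsNullPole (m + 1) a b c d F) : IsNullGerm m a b c d where
  analyticAt_a := h.differentiableOn_a.analyticAt disc_mem_nhds_zero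
  analyticAt_b := h.differentiableOn_b.analyticAt disc_mem_nhds_zero
  analyticAt_c := h.differentiableOn_c.analyticAt disc_mem_nhds_zero
  analyticAt_d := h.differentiableOn_d.analyticAt disc_mem_nhds_zero
  b_zero := h.b_zero
  c_zero := h.c_zero
  d_zero_ne := h.d_zero_ne
  det_eventuallyEq := mem_of_superset disc_mem_nhds_zero fun z hz => (h.det_eq z hz).trans (by ring)
  deriv_mul_deriv_sub_eventuallyEq := by
    have hcont {f : ℂ → ℂ} (hf : DifferentiableOn ℂ f Disc) : ContinuousAt (deriv f) 0 :=
      (hf.analyticAt disc_mem_nhds_zero).deriv.continuousAt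
    refine eventuallyEq_nhds_zero_of_eqOn_pDisc ?_ (by fun_prop) fun z hz =>
      h.deriv_mul_deriv_sub_eq hz
    exact ((hcont h.differentiableOn_a).mul (hcont h.differentiableOn_d)).sub
      ((hcont h.differentiableOn_b).mul (hcont h.differentiableOn_c))

lemma sq_smul_deriv_mul_inv_eq (h : IsNullPole (m + 1) a b c d F) {z : ℂ} (hz : z ∈ PDisc) :
    z ^ 2 • (deriv F z * (F z)⁻¹) =
      (z ^ (2 * m))⁻¹ • derivMulAdjugate a b c d z - (((m : ℂ) + 1) * z) • 1 := by
  have hz0 := ne_zero_of_mem_pDisc hz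
  have hdet : det !![a z, b z; c z, d z] = z ^ (2 * m + 2) := by
    rw [det_fin_two_of, h.det_eq z hz.1]; ring
  rw [h.deriv_eq hz, h.eq_smul z, inv_inv_pow_smul_eq_of_det_eq hz0 (hdet.trans (by ring))]
  push_cast
  exact sq_smul_deriv_mul_inv_eq_of_det_eq hz0 hdet

lemma differentiableOn_derivMulAdjugate (h : IsNullPole n a b c d F) :
    DifferentiableOn ℂ (derivMulAdjugate a b c d) Disc := by
  have hderiv {f : ℂ → ℂ} (hf : DifferentiableOn ℂ f Disc) : DifferentiableOn ℂ (deriv f) Disc :=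
    (hf.analyticOnNhd isOpen_disc).deriv.differentiableOn
  have := hderiv h.differentiableOn_a; have := hderiv h.differentiableOn_b
  have := hderiv h.differentiableOn_c; have := hderiv h.differentiableOn_d
  have := h.differentiableOn_a; have := h.differentiableOn_b
  have := h.differentiableOn_c; have := h.differentiableOn_d
  refine differentiableOn_matrix_iff.2 fun i j => ?_
  fin_cases i <;> fin_cases j <;> simp [derivMulAdjugate_eq] <;> fun_prop

theorem hasPoleOrderTwoAtZero_deriv_mul_inv_iff (h : IsNullPole n a b c d F) :
    (HasPoleOrderTwoAtZero (fun z => deriv F z * (F z)⁻¹) ↔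
        analyticOrderAt c 0 = ((2 * n - 1 : ℕ) : ℕ∞)) ∧
      (HasPoleOrderTwoAtZero (fun z => deriv F z * (F z)⁻¹) ↔ deriv b 0 ≠ 0) := by
  obtain ⟨m, rfl⟩ : ∃ m, n = m + 1 := ⟨n - 1, by have := h.one_le; omega⟩
  have hpole := (hasPoleOrderTwoAtZero_iff_analyticOrderAt_eq _
    h.differentiableOn_derivMulAdjugate fun z hz => h.sq_smul_deriv_mul_inv_eq hz).trans
    h.isNullGerm.analyticOrderAt_derivMulAdjugate_eq_iff
  rw [show 2 * (m + 1) - 1 = 2 * m + 1 by omega]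
  refine ⟨hpole, hpole.trans ?_⟩
  rw [h.isNullGerm.analyticOrderAt_c_eq_iff_analyticOrderAt_b_eq_one,
    h.isNullGerm.analyticAt_b.deriv_ne_zero_iff_analyticOrderAt_eq_one h.b_zero]

end IsNullPole

theorem pole_order_two_characterization_general
    (n : ℕ) (hn : 1 ≤ n)
    (a b c d : ℂ → ℂ)
    (ha : DifferentiableOn ℂ a Disc) (hb : DifferentiableOn ℂ b Disc)
    (hc : DifferentiableOn ℂ c Disc) (hd : DifferentiableOn ℂ d Disc)
    (hb0 : b 0 = 0) (hc0 : c 0 = 0)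
    (hd0 : d 0 ≠ 0)
    (hdet : ∀ z ∈ Disc, a z * d z - b z * c z = z ^ (2 * n))
    (F : ℂ → Matrix (Fin 2) (Fin 2) ℂ)
    (hF : ∀ z, F z = (z ^ n)⁻¹ • !![a z, b z; c z, d z])
    (hnull : ∀ z ∈ PDisc, (deriv F z).det = 0) :
    ∀ (hcA : AnalyticAt ℂ c 0) (hbA : AnalyticAt ℂ b 0),
      (HasPoleOrderTwoAtZero (fun z => deriv F z * (F z)⁻¹) ↔
          analyticOrderAt c 0 = ((2 * n - 1 : ℕ) : ℕ∞)) ∧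
      (HasPoleOrderTwoAtZero (fun z => deriv F z * (F z)⁻¹) ↔ deriv b 0 ≠ 0) ∧
      (HasPoleOrderTwoAtZero (fun z => (F z)⁻¹ * deriv F z) ↔
          analyticOrderAt b 0 = ((2 * n - 1 : ℕ) : ℕ∞)) ∧
      (HasPoleOrderTwoAtZero (fun z => (F z)⁻¹ * deriv F z) ↔ deriv c 0 ≠ 0) := by
  intro _ _
  have hnp : IsNullPole n a b c d F := ⟨hn, ha, hb, hc, hd, hb0, hc0, hd0, hdet, hF, hnull⟩
  have htr : (fun z => deriv (fun w => (F w)ᵀ) z * ((F z)ᵀ)⁻¹) =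
      fun z => ((F z)⁻¹ * deriv F z)ᵀ := by
    ext1 z
    rw [deriv_matrix_transpose, transpose_mul, transpose_nonsing_inv]
  obtain ⟨h₁, h₂⟩ := hnp.hasPoleOrderTwoAtZero_deriv_mul_inv_iff
  obtain ⟨h₃, h₄⟩ := hnp.transpose.hasPoleOrderTwoAtZero_deriv_mul_inv_iff
  rw [htr, hasPoleOrderTwoAtZero_transpose_iff] at h₃ h₄
  exact ⟨h₁, h₂, h₃, h₄⟩

theorem pole_order_two_characterization
    (n : ℕ) (hn : 1 ≤ n)
    (a b c d : ℂ → ℂ)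
    (ha : DifferentiableOn ℂ a Disc) (hb : DifferentiableOn ℂ b Disc)
    (hc : DifferentiableOn ℂ c Disc) (hd : DifferentiableOn ℂ d Disc)
    (ha0 : a 0 = 0) (ha'0 : deriv a 0 = 0) (hb0 : b 0 = 0) (hc0 : c 0 = 0)
    (hd0 : d 0 ≠ 0)
    (hdet : ∀ z ∈ Disc, a z * d z - b z * c z = z ^ (2 * n))
    (F : ℂ → Matrix (Fin 2) (Fin 2) ℂ)
    (hF : ∀ z, F z = (z ^ n)⁻¹ • !![a z, b z; c z, d z])
    (hnull : ∀ z ∈ PDisc, (deriv F z).det = 0) :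
    ∀ (hcA : AnalyticAt ℂ c 0) (hbA : AnalyticAt ℂ b 0),
      (HasPoleOrderTwoAtZero (fun z => deriv F z * (F z)⁻¹) ↔
          analyticOrderAt c 0 = ((2 * n - 1 : ℕ) : ℕ∞)) ∧
      (HasPoleOrderTwoAtZero (fun z => deriv F z * (F z)⁻¹) ↔ deriv b 0 ≠ 0) ∧
      (HasPoleOrderTwoAtZero (fun z => (F z)⁻¹ * deriv F z) ↔
          analyticOrderAt b 0 = ((2 * n - 1 : ℕ) : ℕ∞)) ∧
      (HasPoleOrderTwoAtZero (fun z => (F z)⁻¹ * deriv F z) ↔ deriv c 0 ≠ 0) :=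
  pole_order_two_characterization_general n hn a b c d ha hb hc hd hb0 hc0 hd0 hdet F hF hnull
end

section
/- Let U ⊆ ℂ be open and a,b,c,d,e : U → ℂ holomorphic with a(z)d(z) − b(z)c(z) = e(z)² and e(z) ≠ 0 for all z ∈ U. Set F(z) = e(z)⁻¹ · (a(z), b(z); c(z), d(z)). Then det F(z) = 1 and det F'(z) = e(z)⁻² · (a'(z)d'(z) − b'(z)c'(z) − e'(z)²) for all z ∈ U. In particular, F is null (det F' ≡ 0) if and only if a'd' − b'c' − e'² ≡ 0 on U. -/
/-!
Write `F = e⁻¹ • M` with `M = (a, b; c, d)`. Then `F' = e⁻¹ • (M' - (e'/e) • M)`, and for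
`2 × 2` matrices `det (X + t • Y) = det X + t · tr (adj Y · X) + t² · det Y`. Differentiating
`det M = e²` gives Jacobi's formula `tr (adj M · M') = 2 e e'`, so with `t = -e'/e` the middle
and last terms combine to `-2e'² + e'² = -e'²`.
-/

attribute [local instance] Matrix.normedAddCommGroup Matrix.normedSpace

open Matrix Topology

theorem trace_adjugate_mul_fin_two {R : Type*} [CommRing R] (A B : Matrix (Fin 2) (Fin 2) R) :
    (adjugate A * B).trace = B 0 0 * A 1 1 + A 0 0 * B 1 1 - B 0 1 * A 1 0 - A 0 1 * B 1 0 := by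
  rw [adjugate_fin_two, trace_fin_two]
  simp only [mul_apply, of_apply, cons_val', cons_val_fin_one, cons_val_zero, cons_val_one,
    Fin.sum_univ_two, neg_mul]
  ring

theorem det_inv_smul_add_smul_fin_two {K : Type*} [Field K] (M M' : Matrix (Fin 2) (Fin 2) K)
    {e e' : K} (he : e ≠ 0) (hdet : M.det = e ^ 2)
    (hjacobi : (adjugate M * M').trace = 2 * e * e') :
    (e⁻¹ • M' + (-e' / e ^ 2) • M).det = e⁻¹ ^ 2 * (M'.det - e' ^ 2) := by
  rw [trace_adjugate_mul_fin_two] at hjacobi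
  simp only [det_fin_two] at hdet ⊢
  simp only [Matrix.add_apply, Matrix.smul_apply, smul_eq_mul]
  field_simp
  linear_combination (-e * e') * hjacobi + e' ^ 2 * hdet

section Calculus

variable {𝕜 : Type*} [NontriviallyNormedField 𝕜] {z : 𝕜}

theorem hasDerivAt_matrix_fin_two {a b c d : 𝕜 → 𝕜} {a' b' c' d' : 𝕜}
    (ha : HasDerivAt a a' z) (hb : HasDerivAt b b' z)
    (hc : HasDerivAt c c' z) (hd : HasDerivAt d d' z) :
    HasDerivAt (fun w => !![a w, b w; c w, d w]) !![a', b'; c', d'] z := by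
  refine hasDerivAt_pi.2 fun i => hasDerivAt_pi.2 fun j => ?_
  fin_cases i <;> fin_cases j <;> simpa

theorem hasDerivAt_det_fin_two {M : 𝕜 → Matrix (Fin 2) (Fin 2) 𝕜}
    {M' : Matrix (Fin 2) (Fin 2) 𝕜} (hM : HasDerivAt M M' z) :
    HasDerivAt (fun w => (M w).det) (adjugate (M z) * M').trace z := by
  have hentry (i j : Fin 2) : HasDerivAt (fun w => M w i j) (M' i j) z :=
    hasDerivAt_pi.1 (hasDerivAt_pi.1 hM i) j
  simp_rw [det_fin_two]
  refine (((hentry 0 0).fun_mul (hentry 1 1)).fun_sub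
    ((hentry 0 1).fun_mul (hentry 1 0))).congr_deriv ?_
  rw [trace_adjugate_mul_fin_two]
  ring

theorem det_deriv_inv_smul_of_det_eq_sq {M : 𝕜 → Matrix (Fin 2) (Fin 2) 𝕜}
    {M' : Matrix (Fin 2) (Fin 2) 𝕜} {e : 𝕜 → 𝕜} {e' : 𝕜} (hM : HasDerivAt M M' z)
    (he : HasDerivAt e e' z) (he0 : e z ≠ 0) (hdet : ∀ᶠ w in 𝓝 z, (M w).det = e w ^ 2) :
    (deriv (fun w => (e w)⁻¹ • M w) z).det = (e z)⁻¹ ^ 2 * (M'.det - e' ^ 2) := by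
  have hjacobi : (adjugate (M z) * M').trace = 2 * e z * e' := by
    refine (hasDerivAt_det_fin_two hM).unique ?_
    simpa [mul_comm] using (he.fun_pow 2).congr_of_eventuallyEq hdet
  have hderiv : deriv (fun w => (e w)⁻¹ • M w) z = (e z)⁻¹ • M' + (-e' / e z ^ 2) • M z :=
    -- `by exact` reconciles the algebraic instances on `Matrix` with the normed ones
    ((he.inv he0).smul (F := Matrix (Fin 2) (Fin 2) 𝕜) (by exact hM)).deriv
  rw [hderiv]
  exact det_inv_smul_add_smul_fin_two _ _ he0 hdet.self_of_nhds hjacobi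

end Calculus

theorem quadric_null_curve_correspondence
    (U : Set ℂ) (hU : IsOpen U)
    (a b c d e : ℂ → ℂ)
    (ha : DifferentiableOn ℂ a U) (hb : DifferentiableOn ℂ b U)
    (hc : DifferentiableOn ℂ c U) (hd : DifferentiableOn ℂ d U)
    (he : DifferentiableOn ℂ e U)
    (hquad : ∀ z ∈ U, a z * d z - b z * c z = (e z) ^ 2)
    (he0 : ∀ z ∈ U, e z ≠ 0)
    (F : ℂ → Matrix (Fin 2) (Fin 2) ℂ)
    (hF : ∀ z, F z = (e z)⁻¹ • !![a z, b z; c z, d z]) :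
    (∀ z ∈ U, (F z).det = 1) ∧
    (∀ z ∈ U, (deriv F z).det =
      ((e z)⁻¹) ^ 2 * (deriv a z * deriv d z - deriv b z * deriv c z - (deriv e z) ^ 2)) ∧
    ((∀ z ∈ U, (deriv F z).det = 0) ↔
      (∀ z ∈ U, deriv a z * deriv d z - deriv b z * deriv c z - (deriv e z) ^ 2 = 0)) := by
  have hdetF : ∀ z ∈ U, (deriv F z).det =
      ((e z)⁻¹) ^ 2 * (deriv a z * deriv d z - deriv b z * deriv c z - (deriv e z) ^ 2) := by
    intro z hz
    have hzU : U ∈ 𝓝 z := hU.mem_nhds hz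
    have hM := hasDerivAt_matrix_fin_two (ha.hasDerivAt hzU) (hb.hasDerivAt hzU)
      (hc.hasDerivAt hzU) (hd.hasDerivAt hzU)
    have hdet : ∀ᶠ w in 𝓝 z, !![a w, b w; c w, d w].det = e w ^ 2 :=
      Filter.eventually_of_mem hzU fun w hw => by rw [det_fin_two_of, hquad w hw]
    rw [funext hF, det_deriv_inv_smul_of_det_eq_sq hM (he.hasDerivAt hzU) (he0 z hz) hdet,
      det_fin_two_of]
  refine ⟨fun z hz => ?_, hdetF, forall₂_congr fun z hz => ?_⟩
  · rw [hF, det_smul, Fintype.card_fin, det_fin_two_of, hquad z hz, inv_pow,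
      inv_mul_cancel₀ (pow_ne_zero 2 (he0 z hz))]
  · rw [hdetF z hz, mul_eq_zero_iff_left (pow_ne_zero 2 (inv_ne_zero (he0 z hz)))]
end
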